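/- Let x, x̃ : ℝ → ℝ^d (with the Euclidean norm) and let f₁, f₂ : ℝ^d → ℝ^d be Lipschitz continuous with Lipschitz constants L₁ and L₂ respectively. Assume there are constants μ, η > 0 with ‖f₁(z) − f₂(z)‖ ≤ μ for all z ∈ ℝ^d. Let 0 = T₀ < T₁ < T₂ and T₁ ≤ t̆ ≤ T₂ with t̆ − T₁ ≤ η. Suppose x satisfies x(0) = x₀, x′(t) = f₁(x(t)) for t ∈ (0, T₁] and x′(t) = f₂(x(t)) for t ∈ (T₁, T₂], while x̃ satisfies x̃(0) = x₀, x̃′(t) = f₁(x̃(t)) for t ∈ (0, t̆] and x̃′(t) = f₂(x̃(t)) for t ∈ (t̆, T₂], and both x and x̃ are continuous on [0, T₂]. Then: ‖x(t) − x̃(t)‖ = 0 for t ∈ (0, T₁]; ‖x(t) − x̃(t)‖ ≤ μ (t − T₁) exp(max(L₁, L₂)(t − T₁)) for t ∈ (T₁, t̆]; and ‖x(t) − x̃(t)‖ ≤ μ η exp(L₂(t − t̆) + max(L₁, L₂) η) for t ∈ (t̆, T₂]. -/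

import Mathlib

/-!
On `[0, T₁]` both systems follow `f₁` from `x₀`, so Grönwall's inequality with zero initial gap
makes them coincide. On `[T₁, t̆]` the true system follows `f₂` while the auxiliary one still
follows `f₁`; since the two fields differ by at most `μ`, the true trajectory is a `μ`-approximate
trajectory of `f₁`, and Grönwall's inequality for approximate trajectories bounds the gap by
`μ (t - T₁) exp (max L₁ L₂ (t - T₁))`. On `[t̆, T₂]` both follow `f₂`, so the gap reached at `t̆`
(at most `μ η exp (max L₁ L₂ η)`) grows at most by the factor `exp (L₂ (t - t̆))`.
-/

open Set Filter Topology Real NNReal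

theorem continuous_gronwallBound (K ε : ℝ) :
    Continuous fun p : ℝ × ℝ => gronwallBound p.1 K ε p.2 := by
  unfold gronwallBound
  split_ifs <;> fun_prop

theorem gronwallBound_zero_le_mul_exp {K ε x : ℝ} (hK : 0 ≤ K) (hε : 0 ≤ ε) :
    gronwallBound 0 K ε x ≤ ε * x * exp (K * x) := by
  rcases hK.eq_or_lt with rfl | hK
  · simp [gronwallBound_K0]
  rw [gronwallBound, if_neg hK.ne', zero_mul, zero_add, div_mul_eq_mul_div, div_le_iff₀ hK]
  -- `exp y - 1 ≤ y exp y` is `1 - y ≤ exp (-y)` multiplied by `exp y`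
  have key : exp (K * x) - 1 ≤ K * x * exp (K * x) := by
    have h := add_one_le_exp (-(K * x))
    have h' : exp (K * x) * exp (-(K * x)) = 1 := by rw [← exp_add, add_neg_cancel, exp_zero]
    nlinarith [exp_pos (K * x)]
  nlinarith [mul_le_mul_of_nonneg_left key hε]

theorem nonneg_of_norm_sub_le_mul_norm_sub {E F : Type*} [NormedAddCommGroup E]
    [Nontrivial E] [SeminormedAddCommGroup F] {f : E → F} {L : ℝ}
    (hf : ∀ a b, ‖f a - f b‖ ≤ L * ‖a - b‖) :
    0 ≤ L := by
  obtain ⟨a, b, hab⟩ := exists_pair_ne E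
  exact nonneg_of_mul_nonneg_left ((norm_nonneg _).trans (hf a b))
    (norm_pos_iff.2 (sub_ne_zero.2 hab))

section
variable {E : Type*} [NormedAddCommGroup E] [NormedSpace ℝ E]

/-- Unlike `dist_le_of_approx_trajectories_ODE`, this needs derivatives only on the open interval:
the Mathlib estimate is applied on `[s, t]` and `s` is sent to `a` using continuity at `a`. -/
theorem dist_le_of_approx_trajectories_ODE_of_hasDerivAt_Ioo {v : ℝ → E → E} {K : ℝ≥0}
    (hv : ∀ t, LipschitzWith K (v t)) {f g f' g' : ℝ → E} {a b εf εg : ℝ}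
    (hf : ContinuousOn f (Icc a b)) (hf' : ∀ t ∈ Ioo a b, HasDerivAt f (f' t) t)
    (f_bound : ∀ t ∈ Ioo a b, dist (f' t) (v t (f t)) ≤ εf)
    (hg : ContinuousOn g (Icc a b)) (hg' : ∀ t ∈ Ioo a b, HasDerivAt g (g' t) t)
    (g_bound : ∀ t ∈ Ioo a b, dist (g' t) (v t (g t)) ≤ εg) :
    ∀ t ∈ Icc a b,
      dist (f t) (g t) ≤ gronwallBound (dist (f a) (g a)) K (εf + εg) (t - a) := by
  rintro t ⟨hat, htb⟩
  rcases hat.eq_or_lt with rfl | hat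
  · rw [sub_self, gronwallBound_x0]
  have hsub : ∀ s ∈ Ioo a t, Ico s t ⊆ Ioo a b := fun s hs u hu =>
    ⟨hs.1.trans_le hu.1, hu.2.trans_le htb⟩
  have from_later_start : ∀ s ∈ Ioo a t,
      dist (f t) (g t) ≤ gronwallBound (dist (f s) (g s)) K (εf + εg) (t - s) := fun s hs =>
    dist_le_of_approx_trajectories_ODE hv (hf.mono (Icc_subset_Icc hs.1.le htb))
      (fun u hu => (hf' u (hsub s hs hu)).hasDerivWithinAt)
      (fun u hu => f_bound u (hsub s hs hu)) (hg.mono (Icc_subset_Icc hs.1.le htb))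
      (fun u hu => (hg' u (hsub s hs hu)).hasDerivWithinAt)
      (fun u hu => g_bound u (hsub s hs hu)) le_rfl t ⟨hs.2.le, le_rfl⟩
  have hIcc : Icc a b ∈ 𝓝[>] a := Icc_mem_nhdsGT (hat.trans_le htb)
  have hfa : Tendsto f (𝓝[>] a) (𝓝 (f a)) :=
    (hf a ⟨le_rfl, (hat.trans_le htb).le⟩).mono_of_mem_nhdsWithin hIcc
  have hga : Tendsto g (𝓝[>] a) (𝓝 (g a)) :=
    (hg a ⟨le_rfl, (hat.trans_le htb).le⟩).mono_of_mem_nhdsWithin hIcc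
  have hlim : Tendsto (fun s => gronwallBound (dist (f s) (g s)) K (εf + εg) (t - s)) (𝓝[>] a)
      (𝓝 (gronwallBound (dist (f a) (g a)) K (εf + εg) (t - a))) :=
    (continuous_gronwallBound K (εf + εg)).continuousAt.tendsto.comp
      ((hfa.dist hga).prodMk_nhds ((tendsto_const_nhds.sub tendsto_id).mono_left
        nhdsWithin_le_nhds))
  exact ge_of_tendsto hlim (eventually_of_mem (Ioo_mem_nhdsGT hat) from_later_start)

theorem dist_le_of_trajectories_ODE_of_hasDerivAt_Ioo {v : ℝ → E → E} {K : ℝ≥0}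
    (hv : ∀ t, LipschitzWith K (v t)) {f g : ℝ → E} {a b : ℝ}
    (hf : ContinuousOn f (Icc a b)) (hf' : ∀ t ∈ Ioo a b, HasDerivAt f (v t (f t)) t)
    (hg : ContinuousOn g (Icc a b)) (hg' : ∀ t ∈ Ioo a b, HasDerivAt g (v t (g t)) t) :
    ∀ t ∈ Icc a b, dist (f t) (g t) ≤ dist (f a) (g a) * exp (K * (t - a)) := by
  intro t ht
  have := dist_le_of_approx_trajectories_ODE_of_hasDerivAt_Ioo hv hf hf'
    (fun _ _ => (dist_self _).le) hg hg' (fun _ _ => (dist_self _).le) t ht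
  rwa [add_zero, gronwallBound_ε0] at this

theorem dist_le_of_trajectories_of_dist_vectorField_le {v w : E → E} {K : ℝ≥0}
    (hv : LipschitzWith K v) {μ : ℝ} (hvw : ∀ z, dist (w z) (v z) ≤ μ) {f g : ℝ → E} {a b : ℝ}
    (hf : ContinuousOn f (Icc a b)) (hf' : ∀ t ∈ Ioo a b, HasDerivAt f (w (f t)) t)
    (hg : ContinuousOn g (Icc a b)) (hg' : ∀ t ∈ Ioo a b, HasDerivAt g (v (g t)) t)
    (ha : f a = g a) :
    ∀ t ∈ Icc a b, dist (f t) (g t) ≤ μ * (t - a) * exp (K * (t - a)) := by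
  intro t ht
  have := dist_le_of_approx_trajectories_ODE_of_hasDerivAt_Ioo (v := fun _ => v) (fun _ => hv)
    hf hf' (fun _ _ => hvw _) hg hg' (fun _ _ => (dist_self _).le) t ht
  rw [ha, dist_self, add_zero] at this
  exact this.trans (gronwallBound_zero_le_mul_exp K.coe_nonneg (dist_nonneg.trans (hvw 0)))

end

theorem switched_system_auxiliary_comparison_general
    {d : ℕ}
    (f₁ f₂ : EuclideanSpace ℝ (Fin d) → EuclideanSpace ℝ (Fin d))
    (x xt : ℝ → EuclideanSpace ℝ (Fin d))
    (x₀ : EuclideanSpace ℝ (Fin d))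
    (L₁ L₂ μ η T₁ T₂ tb : ℝ)
    (hf₁ : ∀ a b, ‖f₁ a - f₁ b‖ ≤ L₁ * ‖a - b‖)
    (hf₂ : ∀ a b, ‖f₂ a - f₂ b‖ ≤ L₂ * ‖a - b‖)
    (hdiff : ∀ z, ‖f₁ z - f₂ z‖ ≤ μ)
    (hT₁pos : 0 < T₁)
    (htb₁ : T₁ ≤ tb) (htb₂ : tb ≤ T₂) (htbη : tb - T₁ ≤ η)
    (hx0 : x 0 = x₀) (hxt0 : xt 0 = x₀)
    (hx1 : ∀ t ∈ Set.Ioc (0 : ℝ) T₁, HasDerivAt x (f₁ (x t)) t)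
    (hx2 : ∀ t ∈ Set.Ioc T₁ T₂, HasDerivAt x (f₂ (x t)) t)
    (hxt1 : ∀ t ∈ Set.Ioc (0 : ℝ) tb, HasDerivAt xt (f₁ (xt t)) t)
    (hxt2 : ∀ t ∈ Set.Ioc tb T₂, HasDerivAt xt (f₂ (xt t)) t)
    (hxc : ContinuousOn x (Set.Icc 0 T₂))
    (hxtc : ContinuousOn xt (Set.Icc 0 T₂)) :
    (∀ t ∈ Set.Ioc (0 : ℝ) T₁, ‖x t - xt t‖ = 0) ∧
    (∀ t ∈ Set.Ioc T₁ tb,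
      ‖x t - xt t‖ ≤ μ * (t - T₁) * Real.exp (max L₁ L₂ * (t - T₁))) ∧
    (∀ t ∈ Set.Ioc tb T₂,
      ‖x t - xt t‖ ≤ μ * η * Real.exp (L₂ * (t - tb) + max L₁ L₂ * η)) := by
  have hμ : 0 ≤ μ := (norm_nonneg _).trans (hdiff 0)
  have hη : 0 ≤ η := by linarith
  obtain hE | hE := subsingleton_or_nontrivial (EuclideanSpace ℝ (Fin d))
  · have h0 : ∀ t, ‖x t - xt t‖ = 0 := fun t => by
      rw [Subsingleton.elim (x t) (xt t), sub_self, norm_zero]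
    simp only [h0]
    exact ⟨fun _ _ => trivial, fun t ht => by have := sub_nonneg.2 ht.1.le; positivity,
      fun _ _ => by positivity⟩
  set L := max L₁ L₂
  have hL : 0 ≤ L := (nonneg_of_norm_sub_le_mul_norm_sub hf₁).trans (le_max_left _ _)
  have lip₁ : LipschitzWith ⟨L, hL⟩ f₁ := LipschitzWith.of_dist_le_mul fun a b => by
    rw [dist_eq_norm, dist_eq_norm]; exact (hf₁ a b).trans (by gcongr; exact le_max_left _ _)
  have lip₂ : LipschitzWith ⟨L₂, nonneg_of_norm_sub_le_mul_norm_sub hf₂⟩ f₂ :=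
    LipschitzWith.of_dist_le_mul fun a b => by rw [dist_eq_norm, dist_eq_norm]; exact hf₂ a b
  have early (t : ℝ) (ht : t ∈ Icc 0 T₁) : dist (x t) (xt t) = 0 := by
    have := dist_le_of_trajectories_ODE_of_hasDerivAt_Ioo (fun _ => lip₁)
      (hxc.mono (Icc_subset_Icc_right (htb₁.trans htb₂))) (fun t ht => hx1 t ⟨ht.1, ht.2.le⟩)
      (hxtc.mono (Icc_subset_Icc_right (htb₁.trans htb₂)))
      (fun t ht => hxt1 t ⟨ht.1, ht.2.le.trans htb₁⟩) t ht
    rw [hx0, hxt0, dist_self, zero_mul] at this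
    exact le_antisymm this dist_nonneg
  have middle (t : ℝ) (ht : t ∈ Icc T₁ tb) :
      dist (x t) (xt t) ≤ μ * (t - T₁) * exp (L * (t - T₁)) :=
    dist_le_of_trajectories_of_dist_vectorField_le lip₁
      (fun z => by rw [dist_comm, dist_eq_norm]; exact hdiff z)
      (hxc.mono (Icc_subset_Icc hT₁pos.le htb₂))
      (fun t ht => hx2 t ⟨ht.1, ht.2.le.trans htb₂⟩)
      (hxtc.mono (Icc_subset_Icc hT₁pos.le htb₂))
      (fun t ht => hxt1 t ⟨hT₁pos.trans ht.1, ht.2.le⟩)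
      (dist_eq_zero.1 (early T₁ ⟨hT₁pos.le, le_rfl⟩)) t ht
  have late (t : ℝ) (ht : t ∈ Icc tb T₂) :
      dist (x t) (xt t) ≤ dist (x tb) (xt tb) * exp (L₂ * (t - tb)) :=
    dist_le_of_trajectories_ODE_of_hasDerivAt_Ioo (fun _ => lip₂)
      (hxc.mono (Icc_subset_Icc_left (hT₁pos.le.trans htb₁)))
      (fun t ht => hx2 t ⟨htb₁.trans_lt ht.1, ht.2.le⟩)
      (hxtc.mono (Icc_subset_Icc_left (hT₁pos.le.trans htb₁)))
      (fun t ht => hxt2 t ⟨ht.1, ht.2.le⟩) t ht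
  refine ⟨fun t ht => ?_, fun t ht => ?_, fun t ht => ?_⟩
  · exact dist_eq_norm (x t) (xt t) ▸ early t (Ioc_subset_Icc_self ht)
  · exact dist_eq_norm (x t) (xt t) ▸ middle t (Ioc_subset_Icc_self ht)
  rw [← dist_eq_norm, add_comm, exp_add, ← mul_assoc]
  refine (late t (Ioc_subset_Icc_self ht)).trans (mul_le_mul_of_nonneg_right ?_ (exp_pos _).le)
  calc dist (x tb) (xt tb) ≤ μ * (tb - T₁) * exp (L * (tb - T₁)) := middle tb ⟨htb₁, le_rfl⟩
    _ ≤ μ * η * exp (L * η) := by gcongr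

/-- Proposition 1 (case t̆ ≥ T₁): comparison between the true switched system `x`
(switching from `f₁` to `f₂` at time `T₁`) and the auxiliary system `xt`
(switching at the approximate switching time `tb ≥ T₁`). -/
theorem switched_system_auxiliary_comparison
    {d : ℕ}
    (f₁ f₂ : EuclideanSpace ℝ (Fin d) → EuclideanSpace ℝ (Fin d))
    (x xt : ℝ → EuclideanSpace ℝ (Fin d))
    (x₀ : EuclideanSpace ℝ (Fin d))
    (L₁ L₂ μ η T₁ T₂ tb : ℝ)
    (hf₁ : ∀ a b, ‖f₁ a - f₁ b‖ ≤ L₁ * ‖a - b‖)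
    (hf₂ : ∀ a b, ‖f₂ a - f₂ b‖ ≤ L₂ * ‖a - b‖)
    (hμ : 0 < μ) (hη : 0 < η)
    (hdiff : ∀ z, ‖f₁ z - f₂ z‖ ≤ μ)
    (hT₁pos : 0 < T₁) (hT₁₂ : T₁ < T₂)
    (htb₁ : T₁ ≤ tb) (htb₂ : tb ≤ T₂) (htbη : tb - T₁ ≤ η)
    (hx0 : x 0 = x₀) (hxt0 : xt 0 = x₀)
    (hx1 : ∀ t ∈ Set.Ioc (0 : ℝ) T₁, HasDerivAt x (f₁ (x t)) t)
    (hx2 : ∀ t ∈ Set.Ioc T₁ T₂, HasDerivAt x (f₂ (x t)) t)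
    (hxt1 : ∀ t ∈ Set.Ioc (0 : ℝ) tb, HasDerivAt xt (f₁ (xt t)) t)
    (hxt2 : ∀ t ∈ Set.Ioc tb T₂, HasDerivAt xt (f₂ (xt t)) t)
    (hxc : ContinuousOn x (Set.Icc 0 T₂))
    (hxtc : ContinuousOn xt (Set.Icc 0 T₂)) :
    (∀ t ∈ Set.Ioc (0 : ℝ) T₁, ‖x t - xt t‖ = 0) ∧
    (∀ t ∈ Set.Ioc T₁ tb,
      ‖x t - xt t‖ ≤ μ * (t - T₁) * Real.exp (max L₁ L₂ * (t - T₁))) ∧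
    (∀ t ∈ Set.Ioc tb T₂,
      ‖x t - xt t‖ ≤ μ * η * Real.exp (L₂ * (t - tb) + max L₁ L₂ * η)) :=
  switched_system_auxiliary_comparison_general f₁ f₂ x xt x₀ L₁ L₂ μ η T₁ T₂ tb hf₁ hf₂ hdiff hT₁pos
    htb₁ htb₂ htbη hx0 hxt0 hx1 hx2 hxt1 hxt2 hxc hxtc
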